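/- arXiv:1606.03034 — 5 statements merged into one kernel-verified Lean document; each statement's English description precedes it below -/
import Mathlib

section
/- The following (n+1)² elements form an 𝔽₂-basis of A_n: the idempotents e_i for 0 ≤ i ≤ n, the products ι_{j−1} ι_{j−2} ⋯ ι_i for 0 ≤ i < j ≤ n, and the products x_{j−1} ι_{j−2} ⋯ ι_i for 0 ≤ i < j ≤ n (where for j = i+1 the last product is just x_i). In particular dim_{𝔽₂} A_n = (n+1)². (This is the PBW/Koszul basis of A_n: every nonzero path is equivalent to a word with at most one x, placed at the far left.) -/
open scoped TensorProduct

abbrev F2 : Type := ZMod 2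

inductive GenA (n : ℕ) : Type
  | e : Fin (n + 1) → GenA n
  | iota : Fin n → GenA n
  | x : Fin n → GenA n

inductive RelA (n : ℕ) : FreeAlgebra F2 (GenA n) → FreeAlgebra F2 (GenA n) → Prop
  | e_orth (i j : Fin (n + 1)) (h : i ≠ j) :
      RelA n (FreeAlgebra.ι F2 (GenA.e i) * FreeAlgebra.ι F2 (GenA.e j)) 0
  | e_idem (i : Fin (n + 1)) :
      RelA n (FreeAlgebra.ι F2 (GenA.e i) * FreeAlgebra.ι F2 (GenA.e i))
        (FreeAlgebra.ι F2 (GenA.e i))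
  | e_sum : RelA n (∑ i : Fin (n + 1), FreeAlgebra.ι F2 (GenA.e i)) 1
  | e_iota (i : Fin n) :
      RelA n (FreeAlgebra.ι F2 (GenA.e i.succ) * FreeAlgebra.ι F2 (GenA.iota i))
        (FreeAlgebra.ι F2 (GenA.iota i))
  | iota_e (i : Fin n) :
      RelA n (FreeAlgebra.ι F2 (GenA.iota i) * FreeAlgebra.ι F2 (GenA.e i.castSucc))
        (FreeAlgebra.ι F2 (GenA.iota i))
  | e_x (i : Fin n) :
      RelA n (FreeAlgebra.ι F2 (GenA.e i.succ) * FreeAlgebra.ι F2 (GenA.x i))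
        (FreeAlgebra.ι F2 (GenA.x i))
  | x_e (i : Fin n) :
      RelA n (FreeAlgebra.ι F2 (GenA.x i) * FreeAlgebra.ι F2 (GenA.e i.castSucc))
        (FreeAlgebra.ι F2 (GenA.x i))
  | iota_x (i j : Fin n) (h : (i : ℕ) + 1 = j) :
      RelA n (FreeAlgebra.ι F2 (GenA.iota j) * FreeAlgebra.ι F2 (GenA.x i))
        (FreeAlgebra.ι F2 (GenA.x j) * FreeAlgebra.ι F2 (GenA.iota i))
  | x_x (i j : Fin n) (h : (i : ℕ) + 1 = j) :
      RelA n (FreeAlgebra.ι F2 (GenA.x j) * FreeAlgebra.ι F2 (GenA.x i)) 0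

/-- The algebra `A_n`, a quotient of the path algebra of the quiver `G_n`. -/
abbrev AlgA (n : ℕ) : Type := RingQuot (RelA n)

noncomputable def Ae (n : ℕ) (i : Fin (n + 1)) : AlgA n :=
  RingQuot.mkAlgHom F2 (RelA n) (FreeAlgebra.ι F2 (GenA.e i))

noncomputable def Aiota (n : ℕ) (i : Fin n) : AlgA n :=
  RingQuot.mkAlgHom F2 (RelA n) (FreeAlgebra.ι F2 (GenA.iota i))

noncomputable def Ax (n : ℕ) (i : Fin n) : AlgA n :=
  RingQuot.mkAlgHom F2 (RelA n) (FreeAlgebra.ι F2 (GenA.x i))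

/-- `ι_i` with out-of-range indices sent to `0`. -/
noncomputable def AiotaN (n i : ℕ) : AlgA n := if h : i < n then Aiota n ⟨i, h⟩ else 0

/-- `x_i` with out-of-range indices sent to `0`. -/
noncomputable def AxN (n i : ℕ) : AlgA n := if h : i < n then Ax n ⟨i, h⟩ else 0

/-- The product `ι_{j-1} ι_{j-2} ⋯ ι_i` (equal to `1` when `j ≤ i`). -/
noncomputable def iotaWord (n i j : ℕ) : AlgA n :=
  (((List.range (j - i)).reverse).map (fun k => AiotaN n (i + k))).prod

/-- The product `x_{j-1} ι_{j-2} ⋯ ι_i`. -/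
noncomputable def xWord (n i j : ℕ) : AlgA n := AxN n (j - 1) * iotaWord n i (j - 1)

/-- Index type for the PBW basis of `A_n`: idempotents `e_i`, pairs `i < j` for the
`ι`-words, and pairs `i < j` for the `x`-words; it has `(n+1)^2` elements. -/
abbrev BasisIdx (n : ℕ) : Type :=
  Fin (n + 1) ⊕
    ({p : Fin (n + 1) × Fin (n + 1) // p.1 < p.2} ⊕ {p : Fin (n + 1) × Fin (n + 1) // p.1 < p.2})

noncomputable def basisElt (n : ℕ) : BasisIdx n → AlgA n
  | Sum.inl i => Ae n i
  | Sum.inr (Sum.inl p) => iotaWord n p.1.1 p.1.2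
  | Sum.inr (Sum.inr p) => xWord n p.1.1 p.1.2

----------------------------------------------------------------
-- Auxiliary development
----------------------------------------------------------------

section Aux

variable (n : ℕ)

lemma mk_rel {a b : FreeAlgebra F2 (GenA n)} (h : RelA n a b) :
    RingQuot.mkAlgHom F2 (RelA n) a = RingQuot.mkAlgHom F2 (RelA n) b :=
  RingQuot.mkAlgHom_rel F2 h

lemma Ae_mul_Ae (i j : Fin (n + 1)) :
    Ae n i * Ae n j = if i = j then Ae n i else 0 := by
  split_ifs with h
  · subst h
    rw [Ae, ← map_mul]
    exact mk_rel n (RelA.e_idem i)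
  · rw [Ae, Ae, ← map_mul, show (0 : AlgA n) = RingQuot.mkAlgHom F2 (RelA n) 0 from (map_zero _).symm]
    exact mk_rel n (RelA.e_orth i j h)

lemma Ae_sum : ∑ i : Fin (n + 1), Ae n i = 1 := by
  have := mk_rel n (RelA.e_sum (n := n))
  rw [map_sum, map_one] at this
  exact this

lemma e_mul_iota (i : Fin n) : Ae n i.succ * Aiota n i = Aiota n i := by
  rw [Ae, Aiota, ← map_mul]; exact mk_rel n (RelA.e_iota i)

lemma iota_mul_e (i : Fin n) : Aiota n i * Ae n i.castSucc = Aiota n i := by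
  rw [Ae, Aiota, ← map_mul]; exact mk_rel n (RelA.iota_e i)

lemma e_mul_x (i : Fin n) : Ae n i.succ * Ax n i = Ax n i := by
  rw [Ae, Ax, ← map_mul]; exact mk_rel n (RelA.e_x i)

lemma x_mul_e (i : Fin n) : Ax n i * Ae n i.castSucc = Ax n i := by
  rw [Ae, Ax, ← map_mul]; exact mk_rel n (RelA.x_e i)

lemma iota_mul_x (i j : Fin n) (h : (i : ℕ) + 1 = j) :
    Aiota n j * Ax n i = Ax n j * Aiota n i := by
  simp only [Aiota, Ax, ← map_mul]; exact mk_rel n (RelA.iota_x i j h)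

lemma x_mul_x (i j : Fin n) (h : (i : ℕ) + 1 = j) : Ax n j * Ax n i = 0 := by
  simp only [Ax, ← map_mul, show (0 : AlgA n) = RingQuot.mkAlgHom F2 (RelA n) 0 from (map_zero _).symm]
  exact mk_rel n (RelA.x_x i j h)

lemma Ae_mul_Aiota (k : Fin (n + 1)) (i : Fin n) :
    Ae n k * Aiota n i = if k = i.succ then Aiota n i else 0 := by
  conv_lhs => rw [← e_mul_iota n i, ← mul_assoc, Ae_mul_Ae]
  split_ifs with h
  · subst h; exact e_mul_iota n i
  · simp

lemma Ae_mul_Ax (k : Fin (n + 1)) (i : Fin n) :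
    Ae n k * Ax n i = if k = i.succ then Ax n i else 0 := by
  conv_lhs => rw [← e_mul_x n i, ← mul_assoc, Ae_mul_Ae]
  split_ifs with h
  · subst h; exact e_mul_x n i
  · simp

lemma Aiota_mul_Ae (k : Fin (n + 1)) (i : Fin n) :
    Aiota n i * Ae n k = if i.castSucc = k then Aiota n i else 0 := by
  conv_lhs => rw [← iota_mul_e n i, mul_assoc, Ae_mul_Ae]
  split_ifs with h
  · exact iota_mul_e n i
  · simp

lemma Ax_mul_Ae (k : Fin (n + 1)) (i : Fin n) :
    Ax n i * Ae n k = if i.castSucc = k then Ax n i else 0 := by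
  conv_lhs => rw [← x_mul_e n i, mul_assoc, Ae_mul_Ae]
  split_ifs with h
  · exact x_mul_e n i
  · simp

end Aux

section Words

variable (n : ℕ)

lemma iotaWord_self (i : ℕ) : iotaWord n i i = 1 := by
  simp [iotaWord]

lemma iotaWord_succ {i j : ℕ} (h : i ≤ j) :
    iotaWord n i (j + 1) = AiotaN n j * iotaWord n i j := by
  unfold iotaWord
  rw [Nat.succ_sub h, List.range_succ, List.reverse_append]
  simp [Nat.add_sub_cancel' h]

lemma xWord_succ (i j : ℕ) : xWord n i (j + 1) = AxN n j * iotaWord n i j := by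
  simp [xWord]

lemma iotaWord_eq_e_mul {i j : ℕ} (hij : i < j) (hj : j ≤ n) :
    iotaWord n i j = Ae n ⟨j, Nat.lt_succ_of_le hj⟩ * iotaWord n i j := by
  obtain ⟨j, rfl⟩ : ∃ j', j = j' + 1 := ⟨j - 1, by omega⟩
  rw [iotaWord_succ n (by omega : i ≤ j)]
  have hjn : j < n := by omega
  rw [show AiotaN n j = Aiota n ⟨j, hjn⟩ from dif_pos hjn, ← mul_assoc,
    show (⟨j + 1, Nat.lt_succ_of_le hj⟩ : Fin (n + 1)) = (⟨j, hjn⟩ : Fin n).succ from rfl,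
    e_mul_iota]

lemma xWord_eq_e_mul {i j : ℕ} (hij : i < j) (hj : j ≤ n) :
    xWord n i j = Ae n ⟨j, Nat.lt_succ_of_le hj⟩ * xWord n i j := by
  obtain ⟨j, rfl⟩ : ∃ j', j = j' + 1 := ⟨j - 1, by omega⟩
  rw [xWord_succ]
  have hjn : j < n := by omega
  rw [show AxN n j = Ax n ⟨j, hjn⟩ from dif_pos hjn, ← mul_assoc,
    show (⟨j + 1, Nat.lt_succ_of_le hj⟩ : Fin (n + 1)) = (⟨j, hjn⟩ : Fin n).succ from rfl,
    e_mul_x]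

lemma Ae_mul_iotaWord (k : Fin (n + 1)) {i j : ℕ} (hij : i < j) (hj : j ≤ n) :
    Ae n k * iotaWord n i j = if (k : ℕ) = j then iotaWord n i j else 0 := by
  rw [iotaWord_eq_e_mul n hij hj, ← mul_assoc, Ae_mul_Ae]
  split_ifs with h1 h2 h2
  · rw [h1]
  · exact absurd (congrArg Fin.val h1) h2
  · exact absurd (Fin.ext h2) h1
  · simp

lemma Ae_mul_xWord (k : Fin (n + 1)) {i j : ℕ} (hij : i < j) (hj : j ≤ n) :
    Ae n k * xWord n i j = if (k : ℕ) = j then xWord n i j else 0 := by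
  rw [xWord_eq_e_mul n hij hj, ← mul_assoc, Ae_mul_Ae]
  split_ifs with h1 h2 h2
  · rw [h1]
  · exact absurd (congrArg Fin.val h1) h2
  · exact absurd (Fin.ext h2) h1
  · simp

lemma Aiota_mul_iotaWord (k : Fin n) {i j : ℕ} (hij : i < j) (hj : j ≤ n) :
    Aiota n k * iotaWord n i j = if (k : ℕ) = j then iotaWord n i (j + 1) else 0 := by
  split_ifs with h
  · rw [iotaWord_succ n (by omega : i ≤ j),
      show AiotaN n j = Aiota n ⟨j, by omega⟩ from dif_pos (by omega)]
    congr 1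
    exact congrArg (Aiota n) (Fin.ext h)
  · rw [iotaWord_eq_e_mul n hij hj, ← mul_assoc, Aiota_mul_Ae]
    rw [if_neg, zero_mul]
    intro hc
    exact h (congrArg Fin.val hc)

lemma Ax_mul_iotaWord (k : Fin n) {i j : ℕ} (hij : i < j) (hj : j ≤ n) :
    Ax n k * iotaWord n i j = if (k : ℕ) = j then xWord n i (j + 1) else 0 := by
  split_ifs with h
  · rw [xWord_succ, show AxN n j = Ax n ⟨j, by omega⟩ from dif_pos (by omega)]
    congr 1
    exact congrArg (Ax n) (Fin.ext h)
  · rw [iotaWord_eq_e_mul n hij hj, ← mul_assoc, Ax_mul_Ae]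
    rw [if_neg, zero_mul]
    intro hc
    exact h (congrArg Fin.val hc)

lemma Aiota_mul_xWord (k : Fin n) {i j : ℕ} (hij : i < j) (hj : j ≤ n) :
    Aiota n k * xWord n i j = if (k : ℕ) = j then xWord n i (j + 1) else 0 := by
  obtain ⟨j, rfl⟩ : ∃ j', j = j' + 1 := ⟨j - 1, by omega⟩
  split_ifs with h
  · have hjn : j < n := by omega
    rw [xWord_succ, show AxN n j = Ax n ⟨j, hjn⟩ from dif_pos hjn, ← mul_assoc,
      iota_mul_x n ⟨j, hjn⟩ k (by simpa using h.symm), mul_assoc]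
    by_cases hij' : i < j
    · rw [show Aiota n ⟨j, hjn⟩ * iotaWord n i j
          = if ((⟨j, hjn⟩ : Fin n) : ℕ) = j then iotaWord n i (j + 1) else 0 from
          Aiota_mul_iotaWord n _ hij' (by omega), if_pos rfl]
      rw [xWord_succ, show AxN n (j + 1) = Ax n ⟨j + 1, by omega⟩ from dif_pos (by omega)]
      congr 1
      exact congrArg (Ax n) (Fin.ext h)
    · have : i = j := by omega
      subst this
      rw [iotaWord_self, mul_one, xWord_succ, iotaWord_succ n (le_refl i), iotaWord_self,
        mul_one, show AxN n (i + 1) = Ax n ⟨i + 1, by omega⟩ from dif_pos (by omega),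
        show AiotaN n i = Aiota n ⟨i, hjn⟩ from dif_pos hjn]
      congr 1
      exact congrArg (Ax n) (Fin.ext h)
  · rw [xWord_eq_e_mul n hij hj, ← mul_assoc, Aiota_mul_Ae]
    rw [if_neg, zero_mul]
    intro hc
    exact h (congrArg Fin.val hc)

lemma Ax_mul_xWord (k : Fin n) {i j : ℕ} (hij : i < j) (hj : j ≤ n) :
    Ax n k * xWord n i j = 0 := by
  obtain ⟨j, rfl⟩ : ∃ j', j = j' + 1 := ⟨j - 1, by omega⟩
  by_cases h : (k : ℕ) = j + 1
  · have hjn : j < n := by omega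
    rw [xWord_succ, show AxN n j = Ax n ⟨j, hjn⟩ from dif_pos hjn, ← mul_assoc,
      x_mul_x n ⟨j, hjn⟩ k (by simpa using h.symm), zero_mul]
  · rw [xWord_eq_e_mul n hij hj, ← mul_assoc, Ax_mul_Ae, if_neg, zero_mul]
    intro hc
    exact h (congrArg Fin.val hc)

lemma Aiota_eq_word (k : Fin n) : Aiota n k = iotaWord n k (k + 1) := by
  rw [iotaWord_succ n (le_refl (k : ℕ)), iotaWord_self, mul_one,
    show AiotaN n k = Aiota n ⟨k, k.isLt⟩ from dif_pos k.isLt]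

lemma Ax_eq_word (k : Fin n) : Ax n k = xWord n k (k + 1) := by
  rw [xWord_succ, iotaWord_self, mul_one,
    show AxN n k = Ax n ⟨k, k.isLt⟩ from dif_pos k.isLt]

end Words

section Rep

open Matrix

abbrev RepM (n : ℕ) : Type := Matrix (Fin (n + 1)) (Fin (n + 1)) (DualNumber F2)

noncomputable def repGen (n : ℕ) : GenA n → RepM n
  | GenA.e i => Matrix.single i i 1
  | GenA.iota i => Matrix.single i.succ i.castSucc 1
  | GenA.x i => Matrix.single i.succ i.castSucc DualNumber.eps

lemma sum_std_one (n : ℕ) :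
    ∑ i : Fin (n + 1), Matrix.single i i (1 : DualNumber F2) = 1 := by
  apply Matrix.ext
  intro a b
  by_cases hab : a = b <;>
    simp [Matrix.sum_apply, Matrix.single, Matrix.one_apply, ite_and, hab]

noncomputable def repA (n : ℕ) : AlgA n →ₐ[F2] RepM n :=
  RingQuot.liftAlgHom F2 ⟨FreeAlgebra.lift F2 (repGen n), by
    intro a b h
    induction h with
    | e_orth i j hij => simp [repGen, Matrix.single_mul_single_of_ne _ _ _ _ hij]
    | e_idem i => simp [repGen]
    | e_sum =>
        simp only [map_sum, _root_.map_one, FreeAlgebra.lift_ι_apply, repGen]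
        exact sum_std_one n
    | e_iota i => simp [repGen]
    | iota_e i => simp [repGen]
    | e_x i => simp [repGen]
    | x_e i => simp [repGen]
    | iota_x i j hij =>
        have hji : (j : Fin n).castSucc = i.succ := Fin.ext (by simp [hij.symm])
        simp only [_root_.map_mul, FreeAlgebra.lift_ι_apply, repGen, hji,
          Matrix.single_mul_single_same, one_mul, mul_one]
    | x_x i j hij =>
        have hji : (j : Fin n).castSucc = i.succ := Fin.ext (by simp [hij.symm])
        simp only [_root_.map_mul, map_zero, FreeAlgebra.lift_ι_apply, repGen, hji,
          Matrix.single_mul_single_same, DualNumber.eps_mul_eps, Matrix.single_zero]⟩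

lemma repA_Ae (n : ℕ) (i : Fin (n + 1)) : repA n (Ae n i) = Matrix.single i i 1 := by
  rw [Ae, repA, RingQuot.liftAlgHom_mkAlgHom_apply, FreeAlgebra.lift_ι_apply]; rfl

lemma repA_Aiota (n : ℕ) (i : Fin n) :
    repA n (Aiota n i) = Matrix.single i.succ i.castSucc 1 := by
  rw [Aiota, repA, RingQuot.liftAlgHom_mkAlgHom_apply, FreeAlgebra.lift_ι_apply]; rfl

lemma repA_Ax (n : ℕ) (i : Fin n) :
    repA n (Ax n i) = Matrix.single i.succ i.castSucc DualNumber.eps := by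
  rw [Ax, repA, RingQuot.liftAlgHom_mkAlgHom_apply, FreeAlgebra.lift_ι_apply]; rfl

lemma repA_iotaWord (n : ℕ) : ∀ {j i : ℕ} (hij : i < j) (hj : j ≤ n),
    repA n (iotaWord n i j)
      = Matrix.single ⟨j, Nat.lt_succ_of_le hj⟩ ⟨i, by omega⟩ 1 := by
  intro j
  induction j with
  | zero => omega
  | succ j ih =>
    intro i hij hj
    rw [iotaWord_succ n (by omega : i ≤ j),
      show AiotaN n j = Aiota n ⟨j, by omega⟩ from dif_pos (by omega), _root_.map_mul, repA_Aiota]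
    by_cases h : i = j
    · subst h
      rw [iotaWord_self, _root_.map_one, mul_one]
      rfl
    · rw [ih (by omega) (by omega),
        show ((⟨j, by omega⟩ : Fin n).castSucc) = (⟨j, Nat.lt_succ_of_le (by omega)⟩ : Fin (n+1)) from rfl,
        Matrix.single_mul_single_same, one_mul]
      rfl

lemma repA_xWord (n : ℕ) {i j : ℕ} (hij : i < j) (hj : j ≤ n) :
    repA n (xWord n i j)
      = Matrix.single ⟨j, Nat.lt_succ_of_le hj⟩ ⟨i, by omega⟩ DualNumber.eps := by
  obtain ⟨j, rfl⟩ : ∃ j', j = j' + 1 := ⟨j - 1, by omega⟩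
  rw [xWord_succ, show AxN n j = Ax n ⟨j, by omega⟩ from dif_pos (by omega), _root_.map_mul, repA_Ax]
  by_cases h : i = j
  · subst h
    rw [iotaWord_self, _root_.map_one, mul_one]
    rfl
  · rw [repA_iotaWord n (by omega) (by omega),
      show ((⟨j, by omega⟩ : Fin n).castSucc) = (⟨j, Nat.lt_succ_of_le (by omega)⟩ : Fin (n+1)) from rfl,
      Matrix.single_mul_single_same, mul_one]
    rfl

end Rep

section Indep

open Matrix

def keyIdx (n : ℕ) : BasisIdx n → (Fin (n + 1) × Fin (n + 1)) × Bool
  | Sum.inl i => ((i, i), false)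
  | Sum.inr (Sum.inl p) => ((p.1.2, p.1.1), false)
  | Sum.inr (Sum.inr p) => ((p.1.2, p.1.1), true)

lemma keyIdx_inj (n : ℕ) : Function.Injective (keyIdx n) := by
  intro a b hab
  rcases a with i | p | p <;> rcases b with i' | q | q <;>
      simp only [keyIdx, Prod.mk.injEq] at hab <;>
      obtain ⟨⟨h1, h2⟩, hb⟩ := hab
  · rw [h1]
  · exact absurd (h2.symm.trans h1) (ne_of_lt q.2)
  · exact absurd hb (by simp)
  · exact absurd (h2.trans h1.symm) (ne_of_lt p.2)
  · rw [Subtype.ext (Prod.ext h2 h1)]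
  · exact absurd hb (by simp)
  · exact absurd hb (by simp)
  · exact absurd hb (by simp)
  · rw [Subtype.ext (Prod.ext h2 h1)]

def fstL (n : ℕ) (r c : Fin (n + 1)) : RepM n →ₗ[F2] F2 where
  toFun M := (M r c).fst
  map_add' M N := by simp [Matrix.add_apply]
  map_smul' g M := by simp [Matrix.smul_apply]

def sndL (n : ℕ) (r c : Fin (n + 1)) : RepM n →ₗ[F2] F2 where
  toFun M := (M r c).snd
  map_add' M N := by simp [Matrix.add_apply]
  map_smul' g M := by simp [Matrix.smul_apply]

lemma fstL_apply (n : ℕ) (r c : Fin (n + 1)) (M : RepM n) : fstL n r c M = (M r c).fst := rfl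

lemma sndL_apply (n : ℕ) (r c : Fin (n + 1)) (M : RepM n) : sndL n r c M = (M r c).snd := rfl

noncomputable def coordF (n : ℕ) (k : (Fin (n + 1) × Fin (n + 1)) × Bool) :
    RepM n →ₗ[F2] F2 :=
  if k.2 then sndL n k.1.1 k.1.2 else fstL n k.1.1 k.1.2

lemma coordF_rep (n : ℕ) (k : (Fin (n + 1) × Fin (n + 1)) × Bool) (idx : BasisIdx n) :
    coordF n k (repA n (basisElt n idx)) = if keyIdx n idx = k then 1 else 0 := by
  rcases k with ⟨⟨r, c⟩, b⟩
  rcases idx with i | p | p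
  · cases b <;>
      simp [coordF, fstL_apply, sndL_apply, basisElt, repA_Ae, keyIdx, Prod.ext_iff,
        Matrix.single, LinearMap.coe_mk, AddHom.coe_mk, Matrix.of_apply, apply_ite TrivSqZeroExt.fst, apply_ite TrivSqZeroExt.snd,
        and_comm, eq_comm]
  · have hr := repA_iotaWord n (show ((p.1.1 : Fin (n+1)) : ℕ) < (p.1.2 : ℕ) from p.2)
      (Nat.lt_succ_iff.mp p.1.2.isLt)
    simp only [Fin.eta] at hr
    cases b <;>
      simp [coordF, fstL_apply, sndL_apply, basisElt, hr, keyIdx, Prod.ext_iff,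
        Matrix.single, LinearMap.coe_mk, AddHom.coe_mk, Matrix.of_apply, apply_ite TrivSqZeroExt.fst, apply_ite TrivSqZeroExt.snd,
        and_comm, eq_comm]
  · have hr := repA_xWord n (show ((p.1.1 : Fin (n+1)) : ℕ) < (p.1.2 : ℕ) from p.2)
      (Nat.lt_succ_iff.mp p.1.2.isLt)
    simp only [Fin.eta] at hr
    cases b <;>
      simp [coordF, fstL_apply, sndL_apply, basisElt, hr, keyIdx, Prod.ext_iff,
        Matrix.single, LinearMap.coe_mk, AddHom.coe_mk, Matrix.of_apply, apply_ite TrivSqZeroExt.fst, apply_ite TrivSqZeroExt.snd,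
        DualNumber.fst_eps, DualNumber.snd_eps, and_comm, eq_comm]

lemma basisElt_indep (n : ℕ) : LinearIndependent F2 (basisElt n) := by
  apply LinearIndependent.of_comp (repA n).toLinearMap
  rw [Fintype.linearIndependent_iff]
  intro g h idx
  have h2 := congrArg (coordF n (keyIdx n idx)) h
  rw [map_sum, map_zero] at h2
  simp only [Function.comp, AlgHom.toLinearMap_apply, _root_.map_smul, coordF_rep,
    smul_eq_mul, mul_ite, mul_one, mul_zero] at h2
  rwa [Finset.sum_eq_single idx
    (fun b _ hb => if_neg fun hc => hb (keyIdx_inj n hc)) (by simp), if_pos rfl] at h2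

end Indep

section Span

variable (n : ℕ)

noncomputable def Sspan : Submodule F2 (AlgA n) := Submodule.span F2 (Set.range (basisElt n))

lemma Ae_mem (i : Fin (n + 1)) : Ae n i ∈ Sspan n :=
  Submodule.subset_span ⟨Sum.inl i, rfl⟩

lemma iotaWord_mem {i j : ℕ} (hij : i < j) (hj : j ≤ n) : iotaWord n i j ∈ Sspan n :=
  Submodule.subset_span ⟨Sum.inr (Sum.inl ⟨(⟨i, by omega⟩, ⟨j, by omega⟩), hij⟩), rfl⟩

lemma xWord_mem {i j : ℕ} (hij : i < j) (hj : j ≤ n) : xWord n i j ∈ Sspan n :=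
  Submodule.subset_span ⟨Sum.inr (Sum.inr ⟨(⟨i, by omega⟩, ⟨j, by omega⟩), hij⟩), rfl⟩

lemma one_mem_Sspan : (1 : AlgA n) ∈ Sspan n := by
  rw [← Ae_sum n]
  exact sum_mem fun i _ => Ae_mem n i

lemma gen_mul_basis (g : GenA n) (idx : BasisIdx n) :
    (RingQuot.mkAlgHom F2 (RelA n)) (FreeAlgebra.ι F2 g) * basisElt n idx ∈ Sspan n := by
  cases g with
  | e k =>
    rcases idx with i | p | p
    · show Ae n k * Ae n i ∈ _
      rw [Ae_mul_Ae]
      split_ifs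
      · exact Ae_mem n k
      · exact zero_mem _
    · show Ae n k * iotaWord n (p.1.1 : ℕ) (p.1.2 : ℕ) ∈ _
      rw [Ae_mul_iotaWord n k (show ((p.1.1 : Fin (n+1)) : ℕ) < (p.1.2 : ℕ) from p.2)
        (Nat.lt_succ_iff.mp p.1.2.isLt)]
      split_ifs
      · exact iotaWord_mem n p.2 (Nat.lt_succ_iff.mp p.1.2.isLt)
      · exact zero_mem _
    · show Ae n k * xWord n (p.1.1 : ℕ) (p.1.2 : ℕ) ∈ _
      rw [Ae_mul_xWord n k (show ((p.1.1 : Fin (n+1)) : ℕ) < (p.1.2 : ℕ) from p.2)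
        (Nat.lt_succ_iff.mp p.1.2.isLt)]
      split_ifs
      · exact xWord_mem n p.2 (Nat.lt_succ_iff.mp p.1.2.isLt)
      · exact zero_mem _
  | iota k =>
    rcases idx with i | p | p
    · show Aiota n k * Ae n i ∈ _
      rw [Aiota_mul_Ae]
      split_ifs
      · rw [Aiota_eq_word]
        exact iotaWord_mem n (Nat.lt_succ_self _) k.isLt
      · exact zero_mem _
    · show Aiota n k * iotaWord n (p.1.1 : ℕ) (p.1.2 : ℕ) ∈ _
      rw [Aiota_mul_iotaWord n k (show ((p.1.1 : Fin (n+1)) : ℕ) < (p.1.2 : ℕ) from p.2)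
        (Nat.lt_succ_iff.mp p.1.2.isLt)]
      split_ifs with h
      · exact iotaWord_mem n (by omega) (by have := k.isLt; omega)
      · exact zero_mem _
    · show Aiota n k * xWord n (p.1.1 : ℕ) (p.1.2 : ℕ) ∈ _
      rw [Aiota_mul_xWord n k (show ((p.1.1 : Fin (n+1)) : ℕ) < (p.1.2 : ℕ) from p.2)
        (Nat.lt_succ_iff.mp p.1.2.isLt)]
      split_ifs with h
      · exact xWord_mem n (by omega) (by have := k.isLt; omega)
      · exact zero_mem _
  | x k =>
    rcases idx with i | p | p
    · show Ax n k * Ae n i ∈ _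
      rw [Ax_mul_Ae]
      split_ifs
      · rw [Ax_eq_word]
        exact xWord_mem n (Nat.lt_succ_self _) k.isLt
      · exact zero_mem _
    · show Ax n k * iotaWord n (p.1.1 : ℕ) (p.1.2 : ℕ) ∈ _
      rw [Ax_mul_iotaWord n k (show ((p.1.1 : Fin (n+1)) : ℕ) < (p.1.2 : ℕ) from p.2)
        (Nat.lt_succ_iff.mp p.1.2.isLt)]
      split_ifs with h
      · exact xWord_mem n (by omega) (by have := k.isLt; omega)
      · exact zero_mem _
    · show Ax n k * xWord n (p.1.1 : ℕ) (p.1.2 : ℕ) ∈ _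
      rw [Ax_mul_xWord n k (show ((p.1.1 : Fin (n+1)) : ℕ) < (p.1.2 : ℕ) from p.2)
        (Nat.lt_succ_iff.mp p.1.2.isLt)]
      exact zero_mem _

lemma gen_mul_mem (g : GenA n) :
    ∀ s ∈ Sspan n, (RingQuot.mkAlgHom F2 (RelA n)) (FreeAlgebra.ι F2 g) * s ∈ Sspan n := by
  intro s hs
  induction hs using Submodule.span_induction with
  | mem y hy =>
    obtain ⟨idx, rfl⟩ := hy
    exact gen_mul_basis n g idx
  | zero => rw [mul_zero]; exact zero_mem _
  | add a b _ _ ha hb => rw [mul_add]; exact add_mem ha hb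
  | smul r a _ ha => rw [mul_smul_comm]; exact Submodule.smul_mem _ r ha

noncomputable def Psub : Subalgebra F2 (AlgA n) where
  carrier := {a | ∀ s ∈ Sspan n, a * s ∈ Sspan n}
  mul_mem' := fun {a b} ha hb s hs => by
    rw [mul_assoc]; exact ha _ (hb s hs)
  add_mem' := fun {a b} ha hb s hs => by
    rw [add_mul]; exact add_mem (ha s hs) (hb s hs)
  algebraMap_mem' := fun r s hs => by
    rw [← Algebra.smul_def]; exact Submodule.smul_mem _ r hs

lemma Psub_top (a : AlgA n) : a ∈ Psub n := by
  have htop : Algebra.adjoin F2 (Set.range fun g : GenA n =>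
      (RingQuot.mkAlgHom F2 (RelA n)) (FreeAlgebra.ι F2 g)) = ⊤ := by
    have hr : (Set.range fun g : GenA n =>
        (RingQuot.mkAlgHom F2 (RelA n)) (FreeAlgebra.ι F2 g))
        = (RingQuot.mkAlgHom F2 (RelA n)) '' Set.range (FreeAlgebra.ι F2) := by
      rw [← Set.range_comp]; rfl
    rw [hr, ← AlgHom.map_adjoin, FreeAlgebra.adjoin_range_ι, Algebra.map_top,
      (AlgHom.range_eq_top _).2 (RingQuot.mkAlgHom_surjective F2 _)]
  have hle : Algebra.adjoin F2 (Set.range fun g : GenA n =>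
      (RingQuot.mkAlgHom F2 (RelA n)) (FreeAlgebra.ι F2 g)) ≤ Psub n := by
    apply Algebra.adjoin_le
    rintro _ ⟨g, rfl⟩
    exact gen_mul_mem n g
  exact hle (htop ▸ Algebra.mem_top)

lemma Sspan_eq_top : Sspan n = ⊤ := by
  rw [eq_top_iff]
  intro a _
  have := Psub_top n a 1 (one_mem_Sspan n)
  rwa [mul_one] at this

end Span

theorem stmt_1 (n : ℕ) (hn : 1 ≤ n) :
    (∃ b : Module.Basis (BasisIdx n) F2 (AlgA n), ∀ idx, b idx = basisElt n idx) ∧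
    Module.finrank F2 (AlgA n) = (n + 1) ^ 2 := by
  have hsp : ⊤ ≤ Submodule.span F2 (Set.range (basisElt n)) :=
    le_of_eq (Sspan_eq_top n).symm
  let b : Module.Basis (BasisIdx n) F2 (AlgA n) := Module.Basis.mk (basisElt_indep n) hsp
  refine ⟨⟨b, fun idx => Module.Basis.mk_apply _ _ idx⟩, ?_⟩
  rw [Module.finrank_eq_card_basis b]
  have e1 : {p : Fin (n + 1) × Fin (n + 1) // p.1 < p.2} ≃ (Σ j : Fin (n + 1), Fin (j : ℕ)) :=
    { toFun := fun p => ⟨p.1.2, ⟨p.1.1, p.2⟩⟩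
      invFun := fun q => ⟨(⟨(q.2 : ℕ), lt_trans q.2.isLt q.1.isLt⟩, q.1), q.2.isLt⟩
      left_inv := fun p => rfl
      right_inv := fun q => rfl }
  have hc : Fintype.card {p : Fin (n + 1) × Fin (n + 1) // p.1 < p.2} * 2 = (n + 1) * n := by
    rw [Fintype.card_congr e1, Fintype.card_sigma]
    simp only [Fintype.card_fin]
    rw [Fin.sum_univ_eq_sum_range (fun i => i) (n + 1), Finset.sum_range_id_mul_two]
    simp
  rw [Fintype.card_sum, Fintype.card_sum, Fintype.card_fin]
  set c := Fintype.card {p : Fin (n + 1) × Fin (n + 1) // p.1 < p.2}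
  have h2 : (n + 1) ^ 2 = (n + 1) * n + (n + 1) := by ring
  omega
end

section
/- The following (n+1)² elements form an 𝔽₂-basis of B_n: the idempotents f_i for 0 ≤ i ≤ n, the products w_{i+1} w_{i+2} ⋯ w_j for 0 ≤ i < j ≤ n, and the products y_{i+1} w_{i+2} ⋯ w_j for 0 ≤ i < j ≤ n (where for j = i+1 the last product is just y_{i+1}). In particular B_n is finite-dimensional over 𝔽₂ with dim_{𝔽₂} B_n = (n+1)². -/
open scoped TensorProduct

/-- Generators of `B_n`: idempotents `f_0, …, f_n`, and arrows `w i`, `y i` (for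
`i : Fin n`) representing the generators `w_{i+1}, y_{i+1} : i+1 → i`. -/
inductive GenB (n : ℕ) : Type
  | f : Fin (n + 1) → GenB n
  | w : Fin n → GenB n
  | y : Fin n → GenB n

inductive RelB (n : ℕ) : FreeAlgebra F2 (GenB n) → FreeAlgebra F2 (GenB n) → Prop
  | f_orth (i j : Fin (n + 1)) (h : i ≠ j) :
      RelB n (FreeAlgebra.ι F2 (GenB.f i) * FreeAlgebra.ι F2 (GenB.f j)) 0
  | f_idem (i : Fin (n + 1)) :
      RelB n (FreeAlgebra.ι F2 (GenB.f i) * FreeAlgebra.ι F2 (GenB.f i))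
        (FreeAlgebra.ι F2 (GenB.f i))
  | f_sum : RelB n (∑ i : Fin (n + 1), FreeAlgebra.ι F2 (GenB.f i)) 1
  | f_w (i : Fin n) :
      RelB n (FreeAlgebra.ι F2 (GenB.f i.castSucc) * FreeAlgebra.ι F2 (GenB.w i))
        (FreeAlgebra.ι F2 (GenB.w i))
  | w_f (i : Fin n) :
      RelB n (FreeAlgebra.ι F2 (GenB.w i) * FreeAlgebra.ι F2 (GenB.f i.succ))
        (FreeAlgebra.ι F2 (GenB.w i))
  | f_y (i : Fin n) :
      RelB n (FreeAlgebra.ι F2 (GenB.f i.castSucc) * FreeAlgebra.ι F2 (GenB.y i))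
        (FreeAlgebra.ι F2 (GenB.y i))
  | y_f (i : Fin n) :
      RelB n (FreeAlgebra.ι F2 (GenB.y i) * FreeAlgebra.ι F2 (GenB.f i.succ))
        (FreeAlgebra.ι F2 (GenB.y i))
  | w_y (i j : Fin n) (h : (i : ℕ) + 1 = j) :
      RelB n (FreeAlgebra.ι F2 (GenB.w i) * FreeAlgebra.ι F2 (GenB.y j))
        (FreeAlgebra.ι F2 (GenB.y i) * FreeAlgebra.ι F2 (GenB.w j))
  | y_y (i j : Fin n) (h : (i : ℕ) + 1 = j) :
      RelB n (FreeAlgebra.ι F2 (GenB.y i) * FreeAlgebra.ι F2 (GenB.y j)) 0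

/-- The algebra `B_n`, the quadratic dual of `A_n`. -/
abbrev AlgB (n : ℕ) : Type := RingQuot (RelB n)

noncomputable def Bf (n : ℕ) (i : Fin (n + 1)) : AlgB n :=
  RingQuot.mkAlgHom F2 (RelB n) (FreeAlgebra.ι F2 (GenB.f i))

/-- The generator `w_{i+1}` of `B_n` (for `i : Fin n`). -/
noncomputable def Bw (n : ℕ) (i : Fin n) : AlgB n :=
  RingQuot.mkAlgHom F2 (RelB n) (FreeAlgebra.ι F2 (GenB.w i))

/-- The generator `y_{i+1}` of `B_n` (for `i : Fin n`). -/
noncomputable def By (n : ℕ) (i : Fin n) : AlgB n :=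
  RingQuot.mkAlgHom F2 (RelB n) (FreeAlgebra.ι F2 (GenB.y i))

/-- `w_{i}` indexed by its true label `i` (`1 ≤ i ≤ n`), out-of-range indices sent to `0`. -/
noncomputable def BwN (n i : ℕ) : AlgB n :=
  if h : i - 1 < n ∧ 1 ≤ i then Bw n ⟨i - 1, h.1⟩ else 0

/-- `y_{i}` indexed by its true label `i` (`1 ≤ i ≤ n`), out-of-range indices sent to `0`. -/
noncomputable def ByN (n i : ℕ) : AlgB n :=
  if h : i - 1 < n ∧ 1 ≤ i then By n ⟨i - 1, h.1⟩ else 0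

/-- The product `w_{i+1} w_{i+2} ⋯ w_j` (equal to `1` when `j ≤ i`). -/
noncomputable def wWord (n i j : ℕ) : AlgB n :=
  ((List.range (j - i)).map (fun k => BwN n (i + 1 + k))).prod

/-- The product `y_{i+1} w_{i+2} ⋯ w_j` (equal to `y_{i+1}` when `j = i + 1`). -/
noncomputable def yWord (n i j : ℕ) : AlgB n :=
  ByN n (i + 1) * ((List.range (j - i - 1)).map (fun k => BwN n (i + 2 + k))).prod

/-- Index type for the basis of `B_n`: idempotents `f_i`, pairs `i < j` for the
`w`-words, and pairs `i < j` for the `y`-words; it has `(n+1)^2` elements. -/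
abbrev BasisIdxB (n : ℕ) : Type :=
  Fin (n + 1) ⊕
    ({p : Fin (n + 1) × Fin (n + 1) // p.1 < p.2} ⊕ {p : Fin (n + 1) × Fin (n + 1) // p.1 < p.2})

noncomputable def basisEltB (n : ℕ) : BasisIdxB n → AlgB n
  | Sum.inl i => Bf n i
  | Sum.inr (Sum.inl p) => wWord n p.1.1 p.1.2
  | Sum.inr (Sum.inr p) => yWord n p.1.1 p.1.2


namespace Model
variable {n : ℕ}

abbrev V (n : ℕ) := (Fin (n + 1) × Bool) →₀ F2

noncomputable def e (x : Fin (n + 1) × Bool) : V n := Finsupp.single x 1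

noncomputable def endo (g : Fin (n + 1) × Bool → V n) : Module.End F2 (V n) :=
  Finsupp.linearCombination F2 g

@[simp] lemma endo_e (g : Fin (n + 1) × Bool → V n) (x) : endo g (e x) = g x := by
  simp [endo, e]

lemma end_ext {f g : Module.End F2 (V n)} (h : ∀ x, f (e x) = g (e x)) : f = g := by
  apply Finsupp.lhom_ext
  intro a b
  have : (Finsupp.single a b : V n) = b • e a := by simp [e, Finsupp.smul_single]
  rw [this, map_smul, map_smul, h]

/-- `W i j` : sends `e (j, t)` to `e (i, t)`. -/
noncomputable def W (i j : Fin (n + 1)) : Module.End F2 (V n) :=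
  endo fun x => if x.1 = j then e (i, x.2) else 0

/-- `Y i j` : sends `e (j, false)` to `e (i, true)`, kills the rest. -/
noncomputable def Y (i j : Fin (n + 1)) : Module.End F2 (V n) :=
  endo fun x => if x.1 = j ∧ x.2 = false then e (i, true) else 0

@[simp] lemma W_e (i j : Fin (n+1)) (x) :
    W i j (e x) = if x.1 = j then e (i, x.2) else 0 := by simp [W]

@[simp] lemma Y_e (i j : Fin (n+1)) (x) :
    Y i j (e x) = if x.1 = j ∧ x.2 = false then e (i, true) else 0 := by simp [Y]

lemma W_mul_W (i j k l : Fin (n+1)) :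
    W i j * W k l = if j = k then W i l else 0 := by
  apply end_ext; intro x
  rcases x with ⟨a, t⟩
  by_cases h1 : a = l <;> by_cases h2 : j = k <;>
    simp [Module.End.mul_apply, h1, h2, eq_comm]

lemma W_mul_Y (i j k l : Fin (n+1)) :
    W i j * Y k l = if j = k then Y i l else 0 := by
  apply end_ext; intro x
  rcases x with ⟨a, t⟩
  by_cases h1 : a = l <;> by_cases h2 : j = k <;> by_cases h3 : t = false <;>
    simp [Module.End.mul_apply, h1, h2, h3, eq_comm]

lemma Y_mul_W (i j k l : Fin (n+1)) :
    Y i j * W k l = if j = k then Y i l else 0 := by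
  apply end_ext; intro x
  rcases x with ⟨a, t⟩
  by_cases h1 : a = l <;> by_cases h2 : j = k <;> by_cases h3 : t = false <;>
    simp [Module.End.mul_apply, h1, h2, h3, eq_comm]

lemma Y_mul_Y (i j k l : Fin (n+1)) : Y i j * Y k l = 0 := by
  apply end_ext; intro x
  rcases x with ⟨a, t⟩
  by_cases h1 : a = l <;> by_cases h3 : t = false <;>
    simp [Module.End.mul_apply, h1, h3]

lemma sum_W : (∑ i : Fin (n+1), W i i) = 1 := by
  apply end_ext; intro x
  rcases x with ⟨a, t⟩
  rw [LinearMap.sum_apply]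
  rw [Finset.sum_eq_single a]
  · simp
  · intro b _ hb; simp [Ne.symm hb]
  · simp

end Model


namespace Model
variable {n : ℕ}

noncomputable def G : GenB n → Module.End F2 (V n)
  | GenB.f i => W i i
  | GenB.w k => W k.castSucc k.succ
  | GenB.y k => Y k.castSucc k.succ

lemma succ_eq_castSucc {i j : Fin n} (h : (i : ℕ) + 1 = j) :
    i.succ = j.castSucc := by
  apply Fin.ext; simpa using h

lemma hrel : ∀ ⦃x y⦄, RelB n x y → FreeAlgebra.lift F2 G x = FreeAlgebra.lift F2 G y := by
  intro x y h
  induction h with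
  | f_orth i j h =>
      simp [map_mul, FreeAlgebra.lift_ι_apply, G, W_mul_W, h]
  | f_idem i =>
      simp [map_mul, FreeAlgebra.lift_ι_apply, G, W_mul_W]
  | f_sum =>
      simp [map_sum, FreeAlgebra.lift_ι_apply, G, sum_W]
  | f_w i =>
      simp [map_mul, FreeAlgebra.lift_ι_apply, G, W_mul_W]
  | w_f i =>
      simp [map_mul, FreeAlgebra.lift_ι_apply, G, W_mul_W]
  | f_y i =>
      simp [map_mul, FreeAlgebra.lift_ι_apply, G, W_mul_Y]
  | y_f i =>
      simp [map_mul, FreeAlgebra.lift_ι_apply, G, Y_mul_W]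
  | w_y i j h =>
      simp [map_mul, FreeAlgebra.lift_ι_apply, G, W_mul_Y, Y_mul_W, succ_eq_castSucc h]
  | y_y i j h =>
      simp [map_mul, FreeAlgebra.lift_ι_apply, G, Y_mul_Y]

noncomputable def phi : AlgB n →ₐ[F2] Module.End F2 (V n) :=
  RingQuot.liftAlgHom F2 ⟨FreeAlgebra.lift F2 G, hrel⟩

@[simp] lemma phi_Bf (i : Fin (n + 1)) : phi (Bf n i) = W i i := by
  simp [phi, Bf, RingQuot.liftAlgHom_mkAlgHom_apply, FreeAlgebra.lift_ι_apply, G]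

@[simp] lemma phi_Bw (k : Fin n) : phi (Bw n k) = W k.castSucc k.succ := by
  simp [phi, Bw, RingQuot.liftAlgHom_mkAlgHom_apply, FreeAlgebra.lift_ι_apply, G]

@[simp] lemma phi_By (k : Fin n) : phi (By n k) = Y k.castSucc k.succ := by
  simp [phi, By, RingQuot.liftAlgHom_mkAlgHom_apply, FreeAlgebra.lift_ι_apply, G]

end Model


section Words
variable {n : ℕ}

lemma wWord_self (i : ℕ) : wWord n i i = 1 := by
  simp [wWord]

lemma BwN_eq {i : ℕ} (h : i < n) : BwN n (i + 1) = Bw n ⟨i, h⟩ := by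
  simp [BwN, h]

lemma ByN_eq {i : ℕ} (h : i < n) : ByN n (i + 1) = By n ⟨i, h⟩ := by
  simp [ByN, h]

lemma wWord_cons {i j : ℕ} (h : i < j) :
    wWord n i j = BwN n (i + 1) * wWord n (i + 1) j := by
  unfold wWord
  rw [show j - i = (j - (i + 1)) + 1 from by omega, List.range_succ_eq_map,
    List.map_cons, List.prod_cons, List.map_map]
  have hfun : ((fun k => BwN n (i + 1 + k)) ∘ Nat.succ) = (fun k => BwN n (i + 2 + k)) :=
    funext fun k => by simp only [Function.comp]; rw [show i + 1 + Nat.succ k = i + 2 + k from by omega]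
  rw [hfun]

lemma yWord_eq (i j : ℕ) : yWord n i j = ByN n (i + 1) * wWord n (i + 1) j := by
  unfold yWord wWord
  rw [show j - i - 1 = j - (i + 1) from by omega]

lemma phi_wWord_aux (d : ℕ) : ∀ (i : ℕ) (h : i + d + 1 ≤ n),
    Model.phi (wWord n i (i + d + 1)) =
      Model.W ⟨i, by omega⟩ ⟨i + d + 1, by omega⟩ := by
  induction d with
  | zero =>
      intro i hi
      rw [wWord_cons (by omega), wWord_self, mul_one, BwN_eq (show i < n by omega),
        Model.phi_Bw]
      congr 1 <;> apply Fin.ext <;> simp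
  | succ d ih =>
      intro i h
      have h2 := ih (i + 1) (by omega)
      have e1 : wWord n i (i + (d + 1) + 1) = BwN n (i + 1) * wWord n (i + 1) (i + (d + 1) + 1) :=
        wWord_cons (by omega)
      have e2 : wWord n (i + 1) (i + (d + 1) + 1) = wWord n (i + 1) ((i + 1) + d + 1) := by
        congr 1; omega
      rw [e1, e2, map_mul, BwN_eq (show i < n by omega), Model.phi_Bw, h2, Model.W_mul_W,
        if_pos (by apply Fin.ext; simp)]
      congr 1 <;> apply Fin.ext <;> simp <;> omega

lemma phi_wWord {i j : ℕ} (hij : i < j) (hj : j ≤ n) :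
    Model.phi (wWord n i j) = Model.W ⟨i, by omega⟩ ⟨j, by omega⟩ := by
  obtain ⟨d, rfl⟩ : ∃ d, j = i + d + 1 := ⟨j - i - 1, by omega⟩
  exact phi_wWord_aux d i (by omega)

lemma phi_yWord {i j : ℕ} (hij : i < j) (hj : j ≤ n) :
    Model.phi (yWord n i j) = Model.Y ⟨i, by omega⟩ ⟨j, by omega⟩ := by
  rw [yWord_eq, map_mul, ByN_eq (show i < n by omega), Model.phi_By]
  rcases eq_or_lt_of_le (show i + 1 ≤ j from hij) with he | hlt
  · subst he
    rw [wWord_self, map_one, mul_one]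
    congr 1 <;> apply Fin.ext <;> simp
  · rw [phi_wWord hlt hj, Model.Y_mul_W, if_pos (by apply Fin.ext; simp)]
    congr 1 <;> apply Fin.ext <;> simp

end Words


namespace Model
variable {n : ℕ}

/-- model image of each claimed basis element -/
noncomputable def MB : BasisIdxB n → Module.End F2 (V n)
  | Sum.inl i => W i i
  | Sum.inr (Sum.inl p) => W p.1.1 p.1.2
  | Sum.inr (Sum.inr p) => Y p.1.1 p.1.2

lemma phi_basisEltB (idx : BasisIdxB n) : phi (basisEltB n idx) = MB idx := by
  rcases idx with i | p | p
  · simp [basisEltB, MB]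
  · rcases p with ⟨⟨a, b⟩, hab⟩
    rw [basisEltB, MB, phi_wWord (show (a:ℕ) < (b:ℕ) from hab) (by omega)]
  · rcases p with ⟨⟨a, b⟩, hab⟩
    rw [basisEltB, MB, phi_yWord (show (a:ℕ) < (b:ℕ) from hab) (by omega)]

def pos (idx : BasisIdxB n) : (Fin (n + 1) × Bool) × (Fin (n + 1) × Bool) :=
  match idx with
  | Sum.inl i => ((i, true), (i, true))
  | Sum.inr (Sum.inl p) => ((p.1.1, false), (p.1.2, false))
  | Sum.inr (Sum.inr p) => ((p.1.1, true), (p.1.2, false))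

noncomputable def ev (idx : BasisIdxB n) : Module.End F2 (V n) →ₗ[F2] F2 :=
  (Finsupp.lapply (pos idx).1).comp (LinearMap.applyₗ (e (pos idx).2))

lemma ev_apply (idx : BasisIdxB n) (T : Module.End F2 (V n)) :
    ev idx T = T (e (pos idx).2) (pos idx).1 := rfl

lemma coeff_e (x y : Fin (n + 1) × Bool) : (e x : V n) y = if x = y then 1 else 0 :=
  Finsupp.single_apply

lemma ev_MB (idx idx' : BasisIdxB n) : ev idx (MB idx') = if idx' = idx then 1 else 0 := by
  rcases idx with i | ⟨⟨a,b⟩,hab⟩ | ⟨⟨a,b⟩,hab⟩ <;>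
    rcases idx' with i' | ⟨⟨a',b'⟩,hab'⟩ | ⟨⟨a',b'⟩,hab'⟩ <;>
    · rw [ev_apply]
      simp only [MB, pos, W_e, Y_e]
      split_ifs <;>
        simp_all [coeff_e, Prod.ext_iff, Subtype.ext_iff] <;>
        first
          | rfl
          | omega
          | (exfalso; omega)
          | (intro h1 h2; exfalso; rw [h1] at hab; rw [h2] at hab; exact lt_irrefl _ (hab.trans hab'))

set_option maxHeartbeats 1000000 in
lemma li : LinearIndependent F2 (basisEltB n) := by
  have hcomp : LinearIndependent F2 (fun idx => phi (basisEltB n idx)) := by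
    apply (Fintype.linearIndependent_iff (R := F2) (M := Module.End F2 (V n))).mpr
    intro g hg idx
    have h2 := congrArg (ev idx) hg
    simp only [map_sum, map_smul, Function.comp_apply, AlgHom.toLinearMap_apply,
      phi_basisEltB, ev_MB, map_zero, smul_ite, smul_zero, Finset.sum_ite_eq',
      Finset.mem_univ, if_true, smul_eq_mul, mul_one, mul_ite, mul_zero] at h2
    exact h2
  exact LinearIndependent.of_comp (M' := Module.End F2 (V n)) phi.toLinearMap (by exact hcomp)

end Model


section SpanB
variable {n : ℕ}

private lemma relq {x y : FreeAlgebra F2 (GenB n)} (h : RelB n x y) :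
    RingQuot.mkAlgHom F2 (RelB n) x = RingQuot.mkAlgHom F2 (RelB n) y :=
  RingQuot.mkAlgHom_rel F2 h

lemma Bf_mul_Bf (i j : Fin (n + 1)) :
    Bf n i * Bf n j = if i = j then Bf n i else 0 := by
  split_ifs with h
  · subst h
    have := relq (RelB.f_idem i); rw [map_mul] at this; exact this
  · have := relq (RelB.f_orth i j h); rw [map_mul, map_zero] at this; exact this

lemma Bf_mul_Bw (i : Fin n) : Bf n i.castSucc * Bw n i = Bw n i := by
  have := relq (RelB.f_w i); rw [map_mul] at this; exact this

lemma Bw_mul_Bf (i : Fin n) : Bw n i * Bf n i.succ = Bw n i := by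
  have := relq (RelB.w_f i); rw [map_mul] at this; exact this

lemma Bf_mul_By (i : Fin n) : Bf n i.castSucc * By n i = By n i := by
  have := relq (RelB.f_y i); rw [map_mul] at this; exact this

lemma By_mul_Bf (i : Fin n) : By n i * Bf n i.succ = By n i := by
  have := relq (RelB.y_f i); rw [map_mul] at this; exact this

lemma sum_Bf : (∑ i : Fin (n + 1), Bf n i) = 1 := by
  have := relq (RelB.f_sum (n := n)); rw [map_sum, map_one] at this; exact this

lemma Bf_mul_Bw' (k : Fin (n + 1)) (i : Fin n) :
    Bf n k * Bw n i = if k = i.castSucc then Bw n i else 0 := by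
  split_ifs with h
  · subst h; exact Bf_mul_Bw i
  · rw [← Bf_mul_Bw i, ← mul_assoc, Bf_mul_Bf, if_neg h, zero_mul]

lemma Bf_mul_By' (k : Fin (n + 1)) (i : Fin n) :
    Bf n k * By n i = if k = i.castSucc then By n i else 0 := by
  split_ifs with h
  · subst h; exact Bf_mul_By i
  · rw [← Bf_mul_By i, ← mul_assoc, Bf_mul_Bf, if_neg h, zero_mul]

lemma Bw_mul_Bf' (i : Fin n) (k : Fin (n + 1)) :
    Bw n i * Bf n k = if k = i.succ then Bw n i else 0 := by
  split_ifs with h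
  · subst h; exact Bw_mul_Bf i
  · rw [← Bw_mul_Bf i, mul_assoc, Bf_mul_Bf, if_neg (fun hh => h hh.symm), mul_zero]

lemma By_mul_Bf' (i : Fin n) (k : Fin (n + 1)) :
    By n i * Bf n k = if k = i.succ then By n i else 0 := by
  split_ifs with h
  · subst h; exact By_mul_Bf i
  · rw [← By_mul_Bf i, mul_assoc, Bf_mul_Bf, if_neg (fun hh => h hh.symm), mul_zero]

lemma Bw_mul_Bw (k i : Fin n) (h : (k : ℕ) + 1 ≠ (i : ℕ)) : Bw n k * Bw n i = 0 := by
  rw [← Bw_mul_Bf k, ← Bf_mul_Bw i, mul_assoc, ← mul_assoc (Bf n k.succ), Bf_mul_Bf,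
    if_neg (by simp [Fin.ext_iff]; omega), zero_mul, mul_zero]

lemma Bw_mul_By (k i : Fin n) (h : (k : ℕ) + 1 ≠ (i : ℕ)) : Bw n k * By n i = 0 := by
  rw [← Bw_mul_Bf k, ← Bf_mul_By i, mul_assoc, ← mul_assoc (Bf n k.succ), Bf_mul_Bf,
    if_neg (by simp [Fin.ext_iff]; omega), zero_mul, mul_zero]

lemma By_mul_Bw (k i : Fin n) (h : (k : ℕ) + 1 ≠ (i : ℕ)) : By n k * Bw n i = 0 := by
  rw [← By_mul_Bf k, ← Bf_mul_Bw i, mul_assoc, ← mul_assoc (Bf n k.succ), Bf_mul_Bf,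
    if_neg (by simp [Fin.ext_iff]; omega), zero_mul, mul_zero]

lemma Bw_mul_By_rel (k i : Fin n) (h : (k : ℕ) + 1 = (i : ℕ)) :
    Bw n k * By n i = By n k * Bw n i := by
  have := relq (RelB.w_y k i h); rw [map_mul, map_mul] at this; exact this

lemma By_mul_By (k i : Fin n) : By n k * By n i = 0 := by
  by_cases h : (k : ℕ) + 1 = (i : ℕ)
  · have := relq (RelB.y_y k i h); rw [map_mul, map_zero] at this; exact this
  · rw [← By_mul_Bf k, ← Bf_mul_By i, mul_assoc, ← mul_assoc (Bf n k.succ), Bf_mul_Bf,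
      if_neg (by simp [Fin.ext_iff]; omega), zero_mul, mul_zero]

/- products of generators with words -/

lemma Bf_mul_wWord (k : Fin (n + 1)) {i j : ℕ} (hij : i < j) (hj : j ≤ n) :
    Bf n k * wWord n i j = if (k : ℕ) = i then wWord n i j else 0 := by
  have hi : i < n := by omega
  rw [wWord_cons hij, BwN_eq hi, ← mul_assoc, Bf_mul_Bw', ite_mul, zero_mul]
  congr 1
  simp [Fin.ext_iff]

lemma Bf_mul_yWord (k : Fin (n + 1)) {i j : ℕ} (hij : i < j) (hj : j ≤ n) :
    Bf n k * yWord n i j = if (k : ℕ) = i then yWord n i j else 0 := by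
  have hi : i < n := by omega
  rw [yWord_eq, ByN_eq hi, ← mul_assoc, Bf_mul_By', ite_mul, zero_mul]
  congr 1
  simp [Fin.ext_iff]

lemma Bw_mul_wWord (k : Fin n) {i j : ℕ} (hij : i < j) (hj : j ≤ n) :
    Bw n k * wWord n i j = if (k : ℕ) + 1 = i then wWord n (k : ℕ) j else 0 := by
  have hi : i < n := by omega
  rw [wWord_cons hij, BwN_eq hi]
  split_ifs with h
  · rw [← mul_assoc]
    have hkj : (k : ℕ) < j := by omega
    rw [wWord_cons hkj, BwN_eq k.isLt, Fin.eta, mul_assoc]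
    congr 1
    rw [h, ← BwN_eq hi, ← wWord_cons hij]
  · rw [← mul_assoc, Bw_mul_Bw k _ (by simpa using h), zero_mul]

lemma Bw_mul_yWord (k : Fin n) {i j : ℕ} (hij : i < j) (hj : j ≤ n) :
    Bw n k * yWord n i j = if (k : ℕ) + 1 = i then yWord n (k : ℕ) j else 0 := by
  have hi : i < n := by omega
  rw [yWord_eq, ByN_eq hi]
  split_ifs with h
  · rw [← mul_assoc, Bw_mul_By_rel k _ (by simpa using h), mul_assoc,
      ← BwN_eq hi, ← wWord_cons hij, yWord_eq, ByN_eq k.isLt, Fin.eta, h]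
  · rw [← mul_assoc, Bw_mul_By k _ (by simpa using h), zero_mul]

lemma By_mul_wWord (k : Fin n) {i j : ℕ} (hij : i < j) (hj : j ≤ n) :
    By n k * wWord n i j = if (k : ℕ) + 1 = i then yWord n (k : ℕ) j else 0 := by
  have hi : i < n := by omega
  split_ifs with h
  · rw [yWord_eq, ByN_eq k.isLt, Fin.eta, h]
  · rw [wWord_cons hij, BwN_eq hi, ← mul_assoc, By_mul_Bw k _ (by simpa using h), zero_mul]

lemma By_mul_yWord (k : Fin n) {i j : ℕ} (hij : i < j) (hj : j ≤ n) :
    By n k * yWord n i j = 0 := by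
  have hi : i < n := by omega
  rw [yWord_eq, ByN_eq hi, ← mul_assoc, By_mul_By, zero_mul]

end SpanB


section Span
variable {n : ℕ}

noncomputable def SB (n : ℕ) : Submodule F2 (AlgB n) :=
  Submodule.span F2 (Set.range (basisEltB n))

lemma Bf_mem (i : Fin (n + 1)) : Bf n i ∈ SB n :=
  Submodule.subset_span ⟨Sum.inl i, rfl⟩

lemma wWord_mem {i j : ℕ} (hij : i < j) (hj : j ≤ n) : wWord n i j ∈ SB n :=
  Submodule.subset_span
    ⟨Sum.inr (Sum.inl ⟨(⟨i, by omega⟩, ⟨j, by omega⟩), by simpa using hij⟩), rfl⟩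

lemma yWord_mem {i j : ℕ} (hij : i < j) (hj : j ≤ n) : yWord n i j ∈ SB n :=
  Submodule.subset_span
    ⟨Sum.inr (Sum.inr ⟨(⟨i, by omega⟩, ⟨j, by omega⟩), by simpa using hij⟩), rfl⟩

lemma Bw_eq_wWord (k : Fin n) : Bw n k = wWord n (k : ℕ) ((k : ℕ) + 1) := by
  rw [wWord_cons (Nat.lt_succ_self _), wWord_self, mul_one, BwN_eq k.isLt, Fin.eta]

lemma By_eq_yWord (k : Fin n) : By n k = yWord n (k : ℕ) ((k : ℕ) + 1) := by
  rw [yWord_eq, wWord_self, mul_one, ByN_eq k.isLt, Fin.eta]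

lemma gen_mul_mem_s3 (g : GenB n) {x : AlgB n} (hx : x ∈ SB n) :
    RingQuot.mkAlgHom F2 (RelB n) (FreeAlgebra.ι F2 g) * x ∈ SB n := by
  induction hx using Submodule.span_induction with
  | mem x hx =>
      obtain ⟨idx, rfl⟩ := hx
      rcases idx with i | ⟨⟨a, b⟩, hab⟩ | ⟨⟨a, b⟩, hab⟩
      · rcases g with i' | k | k
        · show Bf n i' * Bf n i ∈ SB n
          rw [Bf_mul_Bf]
          split_ifs
          · exact Bf_mem i'
          · exact zero_mem _
        · show Bw n k * Bf n i ∈ SB n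
          rw [Bw_mul_Bf']
          split_ifs
          · rw [Bw_eq_wWord]; exact wWord_mem (Nat.lt_succ_self _) k.isLt
          · exact zero_mem _
        · show By n k * Bf n i ∈ SB n
          rw [By_mul_Bf']
          split_ifs
          · rw [By_eq_yWord]; exact yWord_mem (Nat.lt_succ_self _) k.isLt
          · exact zero_mem _
      · have hab' : (a : ℕ) < (b : ℕ) := hab
        have hb : (b : ℕ) ≤ n := by omega
        rcases g with i' | k | k
        · show Bf n i' * wWord n (a : ℕ) (b : ℕ) ∈ SB n
          rw [Bf_mul_wWord i' hab' hb]
          split_ifs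
          · exact wWord_mem hab' hb
          · exact zero_mem _
        · show Bw n k * wWord n (a : ℕ) (b : ℕ) ∈ SB n
          rw [Bw_mul_wWord k hab' hb]
          split_ifs with h
          · exact wWord_mem (by omega) hb
          · exact zero_mem _
        · show By n k * wWord n (a : ℕ) (b : ℕ) ∈ SB n
          rw [By_mul_wWord k hab' hb]
          split_ifs with h
          · exact yWord_mem (by omega) hb
          · exact zero_mem _
      · have hab' : (a : ℕ) < (b : ℕ) := hab
        have hb : (b : ℕ) ≤ n := by omega
        rcases g with i' | k | k
        · show Bf n i' * yWord n (a : ℕ) (b : ℕ) ∈ SB n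
          rw [Bf_mul_yWord i' hab' hb]
          split_ifs
          · exact yWord_mem hab' hb
          · exact zero_mem _
        · show Bw n k * yWord n (a : ℕ) (b : ℕ) ∈ SB n
          rw [Bw_mul_yWord k hab' hb]
          split_ifs with h
          · exact yWord_mem (by omega) hb
          · exact zero_mem _
        · show By n k * yWord n (a : ℕ) (b : ℕ) ∈ SB n
          rw [By_mul_yWord k hab' hb]
          exact zero_mem _
  | zero => rw [mul_zero]; exact zero_mem _
  | add x y _ _ hx hy => rw [mul_add]; exact add_mem hx hy
  | smul a x _ hx => rw [mul_smul_comm]; exact Submodule.smul_mem _ _ hx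

lemma one_mem_SB : (1 : AlgB n) ∈ SB n := by
  rw [← sum_Bf]
  exact Submodule.sum_mem _ fun i _ => Bf_mem i

lemma SB_eq_top : SB n = ⊤ := by
  set G : Set (AlgB n) :=
    Set.range fun g : GenB n => RingQuot.mkAlgHom F2 (RelB n) (FreeAlgebra.ι F2 g) with hG
  have hmul : ∀ x ∈ Submonoid.closure G, ∀ s ∈ SB n, x * s ∈ SB n := by
    intro x hx
    induction hx using Submonoid.closure_induction with
    | mem x hx =>
        intro s hs
        obtain ⟨g, rfl⟩ := hx
        exact gen_mul_mem_s3 g hs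
    | one => intro s hs; rw [one_mul]; exact hs
    | mul x y hx hy px py => intro s hs; rw [mul_assoc]; exact px _ (py s hs)
  have hadj : Algebra.adjoin F2 G = ⊤ := by
    have h1 : G = (RingQuot.mkAlgHom F2 (RelB n)) '' (Set.range (FreeAlgebra.ι F2)) := by
      rw [hG, ← Set.range_comp]; rfl
    rw [h1, ← AlgHom.map_adjoin, FreeAlgebra.adjoin_range_ι, Algebra.map_top,
      (AlgHom.range_eq_top _).mpr (RingQuot.mkAlgHom_surjective F2 (RelB n))]
  have h2 := Algebra.adjoin_eq_span F2 G
  rw [hadj, Algebra.top_toSubmodule] at h2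
  rw [eq_top_iff, h2]
  apply Submodule.span_le.mpr
  intro x hx
  simpa using hmul x hx 1 one_mem_SB

lemma span_basisEltB_top : Submodule.span F2 (Set.range (basisEltB n)) = ⊤ :=
  SB_eq_top

lemma card_lt_pairs (m : ℕ) :
    Fintype.card {p : Fin m × Fin m // p.1 < p.2} * 2 = m * (m - 1) := by
  have e : {p : Fin m × Fin m // p.1 < p.2} ≃ (Σ j : Fin m, Fin (j : ℕ)) :=
    { toFun := fun p => ⟨p.1.2, ⟨p.1.1, p.2⟩⟩
      invFun := fun x => ⟨(⟨(x.2 : ℕ), lt_trans x.2.isLt x.1.isLt⟩, x.1), x.2.isLt⟩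
      left_inv := fun p => rfl
      right_inv := fun x => rfl }
  rw [Fintype.card_congr e, Fintype.card_sigma]
  simp only [Fintype.card_fin]
  rw [Fin.sum_univ_eq_sum_range (fun i => i) m, Finset.sum_range_id_mul_two]

end Span

theorem stmt_3 (n : ℕ) (hn : 1 ≤ n) :
    (∃ b : Module.Basis (BasisIdxB n) F2 (AlgB n), ∀ idx, b idx = basisEltB n idx) ∧
    (FiniteDimensional F2 (AlgB n) ∧ Module.finrank F2 (AlgB n) = (n + 1) ^ 2) := by
  have hsp : ⊤ ≤ Submodule.span F2 (Set.range (basisEltB n)) :=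
    le_of_eq span_basisEltB_top.symm
  let b : Module.Basis (BasisIdxB n) F2 (AlgB n) := Module.Basis.mk Model.li hsp
  have hcard : Fintype.card (BasisIdxB n) = (n + 1) ^ 2 := by
    have hc := card_lt_pairs (n + 1)
    set c := Fintype.card {p : Fin (n + 1) × Fin (n + 1) // p.1 < p.2} with hcdef
    have h1 : Fintype.card (BasisIdxB n) = (n + 1) + (c + c) := by
      simp [Fintype.card_sum, Fintype.card_fin, hcdef]
    rw [h1]
    have h3 : (n + 1) * (n + 1 - 1) = (n + 1) * n := by rw [Nat.add_sub_cancel]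
    calc (n + 1) + (c + c) = (n + 1) + c * 2 := by ring
      _ = (n + 1) + (n + 1) * n := by rw [hc, h3]
      _ = (n + 1) ^ 2 := by ring
  refine ⟨⟨b, fun idx => Module.Basis.mk_apply _ _ idx⟩, ?_, ?_⟩
  · exact Module.Finite.of_basis b
  · rw [Module.finrank_eq_card_basis b, hcard]
end

section
/- Let J ⊆ A_n be the two-sided ideal generated by x_0, …, x_{n−1}. Then J² = 0; that is, a b = 0 in A_n for all a, b ∈ J. -/
open scoped TensorProduct

/-- The two-sided ideal of `A_n` generated by `x_0, …, x_{n-1}`. -/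
noncomputable def Jideal (n : ℕ) : TwoSidedIdeal (AlgA n) :=
  TwoSidedIdeal.span (Set.range (Ax n))

namespace Stmt4Aux

variable (n : ℕ)

lemma negA (x : AlgA n) : -x = x := by
  have h : x + x = 0 := by
    rw [← two_smul F2 x, show (2 : F2) = 0 by decide, zero_smul]
  exact neg_eq_of_add_eq_zero_left h

lemma e_orth {i j : Fin (n + 1)} (h : i ≠ j) : Ae n i * Ae n j = 0 := by
  have := RingQuot.mkAlgHom_rel F2 (RelA.e_orth i j h)
  rw [map_mul, map_zero] at this
  exact this

lemma e_x (i : Fin n) : Ae n i.succ * Ax n i = Ax n i := by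
  have := RingQuot.mkAlgHom_rel F2 (RelA.e_x i)
  rw [map_mul] at this
  exact this

lemma x_e (i : Fin n) : Ax n i * Ae n i.castSucc = Ax n i := by
  have := RingQuot.mkAlgHom_rel F2 (RelA.x_e i)
  rw [map_mul] at this
  exact this

lemma iota_e (i : Fin n) : Aiota n i * Ae n i.castSucc = Aiota n i := by
  have := RingQuot.mkAlgHom_rel F2 (RelA.iota_e i)
  rw [map_mul] at this
  exact this

lemma iota_x {i j : Fin n} (h : (i : ℕ) + 1 = j) :
    Aiota n j * Ax n i = Ax n j * Aiota n i := by
  have := RingQuot.mkAlgHom_rel F2 (RelA.iota_x i j h)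
  rw [map_mul, map_mul] at this
  exact this

lemma x_x {i j : Fin n} (h : (i : ℕ) + 1 = j) : Ax n j * Ax n i = 0 := by
  have := RingQuot.mkAlgHom_rel F2 (RelA.x_x i j h)
  rw [map_mul, map_zero] at this
  exact this

lemma e_x_ne {j : Fin (n + 1)} {i : Fin n} (h : j ≠ i.succ) : Ae n j * Ax n i = 0 := by
  rw [← e_x n i, ← mul_assoc, e_orth n h, zero_mul]

lemma iota_x_ne {j i : Fin n} (h : (j : ℕ) ≠ (i : ℕ) + 1) : Aiota n j * Ax n i = 0 := by
  rw [← iota_e n j, mul_assoc, e_x_ne n (by simpa [Fin.ext_iff] using h), mul_zero]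

lemma x_x_all (j i : Fin n) : Ax n j * Ax n i = 0 := by
  by_cases h : (i : ℕ) + 1 = (j : ℕ)
  · exact x_x n h
  · rw [← x_e n j, mul_assoc,
      e_x_ne n (fun he => h (by simpa [Fin.ext_iff, eq_comm] using he)), mul_zero]

noncomputable def M : Subalgebra F2 (AlgA n) :=
  Algebra.adjoin F2 (Set.range (Ae n) ∪ Set.range (Aiota n))

noncomputable def T : Submodule F2 (AlgA n) :=
  Submodule.span F2 {y | ∃ k : Fin n, ∃ m ∈ M n, y = Ax n k * m}

lemma Ax_mem_T (i : Fin n) : Ax n i ∈ T n :=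
  Submodule.subset_span ⟨i, 1, one_mem _, (mul_one _).symm⟩

lemma T_mul {t : AlgA n} (ht : t ∈ T n) {m : AlgA n} (hm : m ∈ M n) : t * m ∈ T n := by
  induction ht using Submodule.span_induction with
  | mem y hy =>
    obtain ⟨k, m', hm', rfl⟩ := hy
    rw [mul_assoc]
    exact Submodule.subset_span ⟨k, m' * m, mul_mem hm' hm, rfl⟩
  | zero => rw [zero_mul]; exact zero_mem _
  | add a b _ _ ha hb => rw [add_mul]; exact add_mem ha hb
  | smul r a _ ha => rw [smul_mul_assoc]; exact Submodule.smul_mem _ _ ha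

lemma T_kill {t : AlgA n} (ht : t ∈ T n) (k : Fin n) : Ax n k * t = 0 := by
  induction ht using Submodule.span_induction with
  | mem y hy =>
    obtain ⟨l, m, hm, rfl⟩ := hy
    rw [← mul_assoc, x_x_all, zero_mul]
  | zero => rw [mul_zero]
  | add a b _ _ ha hb => rw [mul_add, ha, hb, add_zero]
  | smul r a _ ha => rw [mul_smul_comm, ha, smul_zero]

lemma mul_T_mem {a : AlgA n} (ha : ∀ i, a * Ax n i ∈ T n) {t : AlgA n} (ht : t ∈ T n) :
    a * t ∈ T n := by
  induction ht using Submodule.span_induction with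
  | mem y hy =>
    obtain ⟨k, m, hm, rfl⟩ := hy
    rw [← mul_assoc]
    exact T_mul n (ha k) hm
  | zero => rw [mul_zero]; exact zero_mem _
  | add a b _ _ h1 h2 => rw [mul_add]; exact add_mem h1 h2
  | smul r a _ h1 => rw [mul_smul_comm]; exact Submodule.smul_mem _ _ h1

lemma mul_x_mem_T (c : AlgA n) : ∀ i : Fin n, c * Ax n i ∈ T n := by
  obtain ⟨w, rfl⟩ := RingQuot.mkAlgHom_surjective F2 (RelA n) c
  induction w using FreeAlgebra.induction with
  | grade0 r =>
    intro i
    rw [AlgHom.commutes, Algebra.algebraMap_eq_smul_one, smul_mul_assoc, one_mul]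
    exact Submodule.smul_mem _ _ (Ax_mem_T n i)
  | grade1 g =>
    intro i
    cases g with
    | e j =>
      show Ae n j * Ax n i ∈ T n
      by_cases h : j = i.succ
      · subst h; rw [e_x]; exact Ax_mem_T n i
      · rw [e_x_ne n h]; exact zero_mem _
    | iota j =>
      show Aiota n j * Ax n i ∈ T n
      by_cases h : (i : ℕ) + 1 = (j : ℕ)
      · rw [iota_x n h]
        exact Submodule.subset_span
          ⟨j, Aiota n i, Algebra.subset_adjoin (Or.inr ⟨i, rfl⟩), rfl⟩
      · rw [iota_x_ne n (fun he => h he.symm)]; exact zero_mem _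
    | x j =>
      show Ax n j * Ax n i ∈ T n
      rw [x_x_all]; exact zero_mem _
  | mul a b ha hb =>
    intro i
    rw [map_mul, mul_assoc]
    exact mul_T_mem n ha (hb i)
  | add a b ha hb =>
    intro i
    rw [map_add, add_mul]
    exact add_mem (ha i) (hb i)

lemma key (c : AlgA n) (k i : Fin n) : Ax n k * c * Ax n i = 0 := by
  rw [mul_assoc]
  exact T_kill n (mul_x_mem_T n c i) k

/-- Elements killed by `x_k * c * -` for every `c`. -/
noncomputable def K2 : TwoSidedIdeal (AlgA n) :=
  TwoSidedIdeal.mk' {b | ∀ (c : AlgA n) (k : Fin n), Ax n k * c * b = 0}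
    (fun _ _ => by rw [mul_zero])
    (fun hx hy c k => by rw [mul_add, hx c k, hy c k, add_zero])
    (fun {x} hx c k => by rw [negA, hx c k])
    (fun {x y} hy c k => by rw [← mul_assoc, mul_assoc (Ax n k) c x]; exact hy (c * x) k)
    (fun {x y} hx c k => by rw [← mul_assoc, hx c k, zero_mul])

lemma J_le_K2 {b : AlgA n} (hb : b ∈ Jideal n) : ∀ (c : AlgA n) (k : Fin n),
    Ax n k * c * b = 0 := by
  have := TwoSidedIdeal.mem_span_iff.mp hb (K2 n) ?_
  · rwa [K2, TwoSidedIdeal.mem_mk'] at this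
  · rintro - ⟨l, rfl⟩
    rw [SetLike.mem_coe, K2, TwoSidedIdeal.mem_mk']
    intro c k
    exact key n c k l

noncomputable def K1 : TwoSidedIdeal (AlgA n) :=
  TwoSidedIdeal.mk' {a | ∀ b ∈ Jideal n, a * b = 0}
    (fun _ _ => by rw [zero_mul])
    (fun hx hy b hb => by rw [add_mul, hx b hb, hy b hb, add_zero])
    (fun {x} hx b hb => by rw [negA, hx b hb])
    (fun {x y} hy b hb => by rw [mul_assoc, hy b hb, mul_zero])
    (fun {x y} hx b hb => by
      rw [mul_assoc]
      exact hx _ (TwoSidedIdeal.mul_mem_left _ _ _ hb))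

end Stmt4Aux

theorem stmt_4 (n : ℕ) (hn : 1 ≤ n) :
    ∀ a b : AlgA n, a ∈ Jideal n → b ∈ Jideal n → a * b = 0 := by
  intro a b ha hb
  have h1 := TwoSidedIdeal.mem_span_iff.mp ha (Stmt4Aux.K1 n) ?_
  · rw [Stmt4Aux.K1, TwoSidedIdeal.mem_mk'] at h1
    exact h1 b hb
  · rintro - ⟨k, rfl⟩
    rw [SetLike.mem_coe, Stmt4Aux.K1, TwoSidedIdeal.mem_mk']
    intro b' hb'
    have := Stmt4Aux.J_le_K2 n hb' 1 k
    rwa [mul_one] at this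
end

section
/- Let J' ⊆ B_n be the two-sided ideal generated by y_1, …, y_n. Then (J')² = 0; that is, b b' = 0 in B_n for all b, b' ∈ J'. -/
open scoped TensorProduct

/-- The two-sided ideal of `B_n` generated by `y_1, …, y_n`. -/
noncomputable def Jideal' (n : ℕ) : TwoSidedIdeal (AlgB n) :=
  TwoSidedIdeal.span (Set.range (By n))

namespace Stmt5Aux

variable {n : ℕ}

noncomputable abbrev mkB (n : ℕ) := RingQuot.mkAlgHom F2 (RelB n)

lemma mk_rel {x y : FreeAlgebra F2 (GenB n)} (h : RelB n x y) : mkB n x = mkB n y :=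
  RingQuot.mkAlgHom_rel _ h

lemma Bf_mul_Bf {i j : Fin (n + 1)} (h : i ≠ j) : Bf n i * Bf n j = 0 := by
  have := mk_rel (RelB.f_orth i j h)
  rw [map_mul, map_zero] at this
  simpa [Bf] using this

lemma By_f (i : Fin n) : By n i * Bf n i.succ = By n i := by
  have := mk_rel (RelB.y_f i)
  rw [map_mul] at this
  simpa [Bf, By] using this

lemma f_By (i : Fin n) : Bf n i.castSucc * By n i = By n i := by
  have := mk_rel (RelB.f_y i)
  rw [map_mul] at this
  simpa [Bf, By] using this

lemma Bw_f (i : Fin n) : Bw n i * Bf n i.succ = Bw n i := by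
  have := mk_rel (RelB.w_f i)
  rw [map_mul] at this
  simpa [Bf, Bw] using this

lemma Bw_By_rel {i j : Fin n} (h : (i : ℕ) + 1 = j) :
    Bw n i * By n j = By n i * Bw n j := by
  have := mk_rel (RelB.w_y i j h)
  rw [map_mul, map_mul] at this
  simpa [Bw, By] using this

lemma By_By_rel {i j : Fin n} (h : (i : ℕ) + 1 = j) : By n i * By n j = 0 := by
  have := mk_rel (RelB.y_y i j h)
  rw [map_mul, map_zero] at this
  simpa [By] using this

lemma f_mul_By (k : Fin (n + 1)) (j : Fin n) :
    Bf n k * By n j = 0 ∨ Bf n k * By n j = By n j := by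
  by_cases h : k = j.castSucc
  · right; rw [h, f_By]
  · left
    rw [← f_By j, ← mul_assoc, Bf_mul_Bf h, zero_mul]

lemma By_mul_By (i j : Fin n) : By n i * By n j = 0 := by
  by_cases h : (i : ℕ) + 1 = (j : ℕ)
  · exact By_By_rel h
  · have hne : i.succ ≠ j.castSucc := by
      intro he
      apply h
      have := congrArg Fin.val he
      simpa using this
    calc By n i * By n j = (By n i * Bf n i.succ) * (Bf n j.castSucc * By n j) := by
          rw [By_f, f_By]
      _ = By n i * (Bf n i.succ * Bf n j.castSucc) * By n j := by
          simp only [mul_assoc]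
      _ = 0 := by rw [Bf_mul_Bf hne, mul_zero, zero_mul]

lemma w_mul_By (i j : Fin n) :
    Bw n i * By n j = 0 ∨ Bw n i * By n j = By n i * Bw n j := by
  by_cases h : (i : ℕ) + 1 = (j : ℕ)
  · right; exact Bw_By_rel h
  · left
    have hne : i.succ ≠ j.castSucc := by
      intro he
      apply h
      have := congrArg Fin.val he
      simpa using this
    calc Bw n i * By n j = (Bw n i * Bf n i.succ) * (Bf n j.castSucc * By n j) := by
          rw [Bw_f, f_By]
      _ = Bw n i * (Bf n i.succ * Bf n j.castSucc) * By n j := by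
          simp only [mul_assoc]
      _ = 0 := by rw [Bf_mul_Bf hne, mul_zero, zero_mul]

/-- The submonoid generated by the `f` and `w` generators. -/
def fwM (n : ℕ) : Submonoid (AlgB n) :=
  Submonoid.closure (Set.range (Bf n) ∪ Set.range (Bw n))

lemma fwM_mul_By' {m : AlgB n} (hm : m ∈ fwM n) :
    ∀ j : Fin n, m * By n j = 0 ∨ ∃ k m', m' ∈ fwM n ∧ m * By n j = By n k * m' := by
  induction hm using Submonoid.closure_induction with
  | mem x hx =>
      intro j
      rcases hx with ⟨i, rfl⟩ | ⟨i, rfl⟩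
      · rcases f_mul_By i j with h | h
        · exact Or.inl h
        · exact Or.inr ⟨j, 1, one_mem _, by rw [h, mul_one]⟩
      · rcases w_mul_By i j with h | h
        · exact Or.inl h
        · exact Or.inr ⟨i, Bw n j, Submonoid.subset_closure (Or.inr ⟨j, rfl⟩), h⟩
  | one => exact fun j => Or.inr ⟨j, 1, one_mem _, by rw [one_mul, mul_one]⟩
  | mul x y hx hy ihx ihy =>
      intro j
      rcases ihy j with h | ⟨k, m', hm', h⟩
      · exact Or.inl (by rw [mul_assoc, h, mul_zero])
      · rcases ihx k with h2 | ⟨k', m'', hm'', h2⟩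
        · exact Or.inl (by rw [mul_assoc, h, ← mul_assoc, h2, zero_mul])
        · exact Or.inr ⟨k', m'' * m', mul_mem hm'' hm',
            by rw [mul_assoc, h, ← mul_assoc, h2, mul_assoc]⟩

/-- The `F2`-span of elements `y_k * m` with `m` a word in `f`s and `w`s. -/
def Msub (n : ℕ) : Submodule F2 (AlgB n) :=
  Submodule.span F2 {x | ∃ k m, m ∈ fwM n ∧ x = By n k * m}

lemma Msub_mul_By {v : AlgB n} (hv : v ∈ Msub n) (j : Fin n) : v * By n j = 0 := by
  induction hv using Submodule.span_induction with
  | mem x hx =>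
      obtain ⟨k, m, hm, rfl⟩ := hx
      rcases fwM_mul_By' hm j with h | ⟨k', m', _, h⟩
      · rw [mul_assoc, h, mul_zero]
      · rw [mul_assoc, h, ← mul_assoc, By_mul_By, zero_mul]
  | zero => rw [zero_mul]
  | add x y hx hy ihx ihy => rw [add_mul, ihx, ihy, add_zero]
  | smul a x hx ih => rw [smul_mul_assoc, ih, smul_zero]

lemma Msub_mul_Bf {v : AlgB n} (hv : v ∈ Msub n) (i : Fin (n + 1)) :
    v * Bf n i ∈ Msub n := by
  induction hv using Submodule.span_induction with
  | mem x hx =>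
      obtain ⟨k, m, hm, rfl⟩ := hx
      exact Submodule.subset_span ⟨k, m * Bf n i,
        mul_mem hm (Submonoid.subset_closure (Or.inl ⟨i, rfl⟩)), by rw [mul_assoc]⟩
  | zero => rw [zero_mul]; exact zero_mem _
  | add x y hx hy ihx ihy => rw [add_mul]; exact add_mem ihx ihy
  | smul a x hx ih => rw [smul_mul_assoc]; exact Submodule.smul_mem _ _ ih

lemma Msub_mul_Bw {v : AlgB n} (hv : v ∈ Msub n) (i : Fin n) :
    v * Bw n i ∈ Msub n := by
  induction hv using Submodule.span_induction with
  | mem x hx =>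
      obtain ⟨k, m, hm, rfl⟩ := hx
      exact Submodule.subset_span ⟨k, m * Bw n i,
        mul_mem hm (Submonoid.subset_closure (Or.inr ⟨i, rfl⟩)), by rw [mul_assoc]⟩
  | zero => rw [zero_mul]; exact zero_mem _
  | add x y hx hy ihx ihy => rw [add_mul]; exact add_mem ihx ihy
  | smul a x hx ih => rw [smul_mul_assoc]; exact Submodule.smul_mem _ _ ih

lemma Msub_mul_mk (x : FreeAlgebra F2 (GenB n)) :
    ∀ v ∈ Msub n, v * mkB n x ∈ Msub n := by
  induction x using FreeAlgebra.induction with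
  | grade0 r =>
      intro v hv
      rw [AlgHom.commutes, ← Algebra.commutes, ← Algebra.smul_def]
      exact Submodule.smul_mem _ _ hv
  | grade1 g =>
      intro v hv
      cases g with
      | f i => exact Msub_mul_Bf hv i
      | w i => exact Msub_mul_Bw hv i
      | y i =>
          rw [show mkB n (FreeAlgebra.ι F2 (GenB.y i)) = By n i from rfl,
            Msub_mul_By hv i]
          exact zero_mem _
  | mul a b iha ihb =>
      intro v hv
      rw [map_mul, ← mul_assoc]
      exact ihb _ (iha _ hv)
  | add a b iha ihb =>
      intro v hv
      rw [map_add, mul_add]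
      exact add_mem (iha _ hv) (ihb _ hv)

lemma Msub_mul (v : AlgB n) (hv : v ∈ Msub n) (x : AlgB n) : v * x ∈ Msub n := by
  obtain ⟨a, rfl⟩ := RingQuot.mkAlgHom_surjective F2 (RelB n) x
  exact Msub_mul_mk a v hv

lemma By_mem_Msub (i : Fin n) : By n i ∈ Msub n :=
  Submodule.subset_span ⟨i, 1, one_mem _, by rw [mul_one]⟩

/-- elements annihilated on the left by everything in `Msub`. -/
noncomputable def N2 (n : ℕ) : TwoSidedIdeal (AlgB n) :=
  TwoSidedIdeal.mk' {b | ∀ v ∈ Msub n, v * b = 0}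
    (fun v _ => mul_zero v)
    (fun hx hy v hv => by rw [mul_add, hx v hv, hy v hv, add_zero])
    (fun {x} hx v hv => by
      have h2 : x + x = 0 := by
        rw [← two_smul F2 x, show (2 : F2) = 0 by decide, zero_smul]
      rw [neg_eq_of_add_eq_zero_left h2]; exact hx v hv)
    (fun {x y} hy v hv => by rw [← mul_assoc]; exact hy _ (Msub_mul v hv x))
    (fun {x y} hx v hv => by rw [← mul_assoc, hx v hv, zero_mul])

lemma Msub_mul_J {v : AlgB n} (hv : v ∈ Msub n) {b : AlgB n}
    (hb : b ∈ Jideal' n) : v * b = 0 := by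
  have hb2 : b ∈ N2 n := by
    rw [Jideal', TwoSidedIdeal.mem_span_iff] at hb
    exact hb (N2 n) (by
      rintro _ ⟨i, rfl⟩
      simp only [N2, SetLike.mem_coe, TwoSidedIdeal.mem_mk']
      exact fun v hv => Msub_mul_By hv i)
  rw [N2, TwoSidedIdeal.mem_mk'] at hb2
  exact hb2 v hv

end Stmt5Aux

theorem stmt_5 (n : ℕ) (hn : 1 ≤ n) :
    ∀ b b' : AlgB n, b ∈ Jideal' n → b' ∈ Jideal' n → b * b' = 0 := by
  intro b b' hb hb'
  have hN1 : b ∈ TwoSidedIdeal.mk' {b : AlgB n | ∀ c ∈ Jideal' n, b * c = 0}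
      (fun c _ => zero_mul c)
      (fun hx hy c hc => by rw [add_mul, hx c hc, hy c hc, add_zero])
      (fun {x} hx c hc => by
        have h2 : x + x = 0 := by
          rw [← two_smul F2 x, show (2 : F2) = 0 by decide, zero_smul]
        rw [neg_eq_of_add_eq_zero_left h2]; exact hx c hc)
      (fun {x y} hy c hc => by rw [mul_assoc, hy c hc, mul_zero])
      (fun {x y} hx c hc => by
        rw [mul_assoc]
        exact hx _ ((Jideal' n).mul_mem_left y c hc)) := by
    rw [Jideal', TwoSidedIdeal.mem_span_iff] at hb
    apply hb
    rintro _ ⟨i, rfl⟩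
    simp only [SetLike.mem_coe, TwoSidedIdeal.mem_mk']
    exact fun c hc => Stmt5Aux.Msub_mul_J (Stmt5Aux.By_mem_Msub i) hc
  rw [TwoSidedIdeal.mem_mk'] at hN1
  exact hN1 b' hb'
end

section
/- In T one has the identity D(1 ⊗ 1 ⊗ 1 ⊗ 1) = (id + t)(ζ₁), where ζ₁ = Σ_{i=0}^{n−1} [ ι_i ⊗ y_{i+1} ⊗ 1 ⊗ 1 + x_i ⊗ w_{i+1} ⊗ 1 ⊗ 1 + 1 ⊗ y_{i+1} ⊗ ι_i ⊗ 1 + 1 ⊗ w_{i+1} ⊗ x_i ⊗ 1 ]. (This is Equation (1) in the proof that A_n is π-formal: the differential of the generator 1|1|1|1 of the Hochschild chain model lies in the image of 1 + τ.) -/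
open scoped TensorProduct

/-- `T = (A_n ⊗ B_n) ⊗ (A_n ⊗ B_n)`, the underlying space of the Hochschild chain
model `HC(M ⊗^L M)` for `M = A_n`; a pure tensor `(a₁ ⊗ b₁) ⊗ (a₂ ⊗ b₂)` represents
`a₁ | b₁ | a₂ | b₂`. -/
abbrev Tn (n : ℕ) : Type := (AlgA n ⊗[F2] AlgB n) ⊗[F2] (AlgA n ⊗[F2] AlgB n)

/-- The sum of the four insertion operations for a dual pair `(ξ, ξ')`:
`a₁⊗b₁⊗a₂⊗b₂ ↦ a₁ξ⊗ξ'b₁⊗a₂⊗b₂ + a₁⊗b₁ξ'⊗ξa₂⊗b₂ + a₁⊗b₁⊗a₂ξ⊗ξ'b₂ + ξa₁⊗b₁⊗a₂⊗b₂ξ'`. -/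
noncomputable def ins (n : ℕ) (ξ : AlgA n) (ξ' : AlgB n) : Tn n →ₗ[F2] Tn n :=
  TensorProduct.map
      (TensorProduct.map (LinearMap.mulRight F2 ξ) (LinearMap.mulLeft F2 ξ')) LinearMap.id
    + TensorProduct.map
      (TensorProduct.map LinearMap.id (LinearMap.mulRight F2 ξ'))
      (TensorProduct.map (LinearMap.mulLeft F2 ξ) LinearMap.id)
    + TensorProduct.map LinearMap.id
      (TensorProduct.map (LinearMap.mulRight F2 ξ) (LinearMap.mulLeft F2 ξ'))
    + TensorProduct.map
      (TensorProduct.map (LinearMap.mulLeft F2 ξ) LinearMap.id)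
      (TensorProduct.map LinearMap.id (LinearMap.mulRight F2 ξ'))

/-- The differential `D` on `T`, summing the insertions over the dual pairs
`(ι_i, y_{i+1})` and `(x_i, w_{i+1})` for `0 ≤ i ≤ n-1`. -/
noncomputable def Dmap (n : ℕ) : Tn n →ₗ[F2] Tn n :=
  ∑ i : Fin n, (ins n (Aiota n i) (By n i) + ins n (Ax n i) (Bw n i))

/-- The transposition `t : a₁⊗b₁⊗a₂⊗b₂ ↦ a₂⊗b₂⊗a₁⊗b₁`. -/
noncomputable def tmap (n : ℕ) : Tn n →ₗ[F2] Tn n :=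
  (TensorProduct.comm F2 (AlgA n ⊗[F2] AlgB n) (AlgA n ⊗[F2] AlgB n)).toLinearMap

instance instAddCommGroupTn (n : ℕ) : AddCommGroup (Tn n) :=
  TensorProduct.addCommGroup (R := F2) (M := AlgA n ⊗[F2] AlgB n) (N := AlgA n ⊗[F2] AlgB n)

/-- The generating set of the subspace `W ⊆ T` implementing the trace relation
(moving an idempotent around the cyclic tensor). -/
def Wset (n : ℕ) : Set (Tn n) :=
  {z | ∃ (a₁ a₂ : AlgA n) (b₁ b₂ : AlgB n) (k : Fin (n + 1)),
    z = ((a₁ * Ae n k) ⊗ₜ[F2] b₁) ⊗ₜ[F2] (a₂ ⊗ₜ[F2] b₂)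
        - (a₁ ⊗ₜ[F2] (Bf n k * b₁)) ⊗ₜ[F2] (a₂ ⊗ₜ[F2] b₂) ∨
    z = (a₁ ⊗ₜ[F2] (b₁ * Bf n k)) ⊗ₜ[F2] (a₂ ⊗ₜ[F2] b₂)
        - (a₁ ⊗ₜ[F2] b₁) ⊗ₜ[F2] ((Ae n k * a₂) ⊗ₜ[F2] b₂) ∨
    z = (a₁ ⊗ₜ[F2] b₁) ⊗ₜ[F2] ((a₂ * Ae n k) ⊗ₜ[F2] b₂)
        - (a₁ ⊗ₜ[F2] b₁) ⊗ₜ[F2] (a₂ ⊗ₜ[F2] (Bf n k * b₂)) ∨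
    z = (a₁ ⊗ₜ[F2] b₁) ⊗ₜ[F2] (a₂ ⊗ₜ[F2] (b₂ * Bf n k))
        - ((Ae n k * a₁) ⊗ₜ[F2] b₁) ⊗ₜ[F2] (a₂ ⊗ₜ[F2] b₂)}

/-- The subspace `W ⊆ T`; the quotient `C = T/W` is the Hochschild chain model. -/
noncomputable def Wsub (n : ℕ) : Submodule F2 (Tn n) := Submodule.span F2 (Wset n)

/-- The element `ζ₁ = Σᵢ ( ι_i|y_{i+1}|1|1 + x_i|w_{i+1}|1|1 + 1|y_{i+1}|ι_i|1 + 1|w_{i+1}|x_i|1 )`. -/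
noncomputable def zeta1 (n : ℕ) : Tn n :=
  ∑ i : Fin n,
    ((Aiota n i ⊗ₜ[F2] By n i) ⊗ₜ[F2] ((1 : AlgA n) ⊗ₜ[F2] (1 : AlgB n))
      + (Ax n i ⊗ₜ[F2] Bw n i) ⊗ₜ[F2] ((1 : AlgA n) ⊗ₜ[F2] (1 : AlgB n))
      + ((1 : AlgA n) ⊗ₜ[F2] By n i) ⊗ₜ[F2] (Aiota n i ⊗ₜ[F2] (1 : AlgB n))
      + ((1 : AlgA n) ⊗ₜ[F2] Bw n i) ⊗ₜ[F2] (Ax n i ⊗ₜ[F2] (1 : AlgB n)))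

theorem stmt_8 (n : ℕ) (hn : 1 ≤ n) :
    Dmap n (((1 : AlgA n) ⊗ₜ[F2] (1 : AlgB n)) ⊗ₜ[F2] ((1 : AlgA n) ⊗ₜ[F2] (1 : AlgB n)))
      = zeta1 n + tmap n (zeta1 n) := by
  simp only [Dmap, ins, zeta1, tmap, LinearMap.sum_apply, LinearMap.add_apply,
    TensorProduct.map_tmul, LinearMap.mulRight_apply, LinearMap.mulLeft_apply,
    LinearMap.id_coe, id_eq, one_mul, mul_one, map_sum, map_add,
    LinearEquiv.coe_coe, TensorProduct.comm_tmul]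
  rw [← Finset.sum_add_distrib]
  apply Finset.sum_congr rfl
  intro i _
  abel
end
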